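/- Let H ⊆ [p]^m be a finite downward-closed class (if h ∈ H and g ∈ [p]^m satisfies g_i ≤ h_i for all i, then g ∈ H). Then the average k-degree of H is at most (k+1) times the k-exponential dimension of H. -/

import Mathlib

/-!
Count, for each direction `i`, the vertices whose `i`-edge has more than `k` elements. Since `H` is
downward closed, such an edge is an initial segment of a line of length `> k`, so at least a
`1/(k+1)` fraction of its points have `i`-th coordinate `≥ k`; hence the total `k`-degree is at most
`k+1` times the number of pairs `(v, i)` with `v ∈ H` and `v i ≥ k`. For a fixed `v ∈ H`, the
downward closure of `v` contains every pattern in `[k+1]^T` on the coordinates `T = {i | v i ≥ k}`,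
so `|T|` is at most the `k`-exponential dimension.
-/

/-- The edge of the one-inclusion graph of `H ⊆ [p]^m` in direction `i` through `v`. -/
def edge {m p : ℕ} (H : Finset (Fin m → Fin p)) (i : Fin m) (v : Fin m → Fin p) :
    Finset (Fin m → Fin p) :=
  H.filter fun g => ∀ j, j ≠ i → g j = v j

open Finset Function

section Edge

variable {m p k : ℕ} {H : Finset (Fin m → Fin p)} {i : Fin m} {v : Fin m → Fin p}

lemma injOn_apply_edge : Set.InjOn (fun w : Fin m → Fin p => w i) (edge H i v) := by
  intro w₁ h₁ w₂ h₂ h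
  simp only [edge, coe_filter, Set.mem_ofPred_eq] at h₁ h₂
  funext j
  by_cases hj : j = i
  · subst hj; exact h
  · rw [h₁.2 j hj, h₂.2 j hj]

lemma card_edge_le : #(edge H i v) ≤ p :=
  calc #(edge H i v) = #((edge H i v).image fun w => w i) :=
        (card_image_of_injOn injOn_apply_edge).symm
    _ ≤ #(univ : Finset (Fin p)) := card_le_card (subset_univ _)
    _ = p := by simp

lemma exists_mem_edge_le_apply (h : k < #(edge H i v)) :
    ∃ w ∈ edge H i v, k ≤ (w i : ℕ) := by
  by_contra! hsmall
  have : #(edge H i v) ≤ #(range k) :=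
    card_le_card_of_injOn (fun w => (w i : ℕ)) (fun w hw => mem_range.mpr (hsmall w hw))
      fun w₁ h₁ w₂ h₂ h => injOn_apply_edge h₁ h₂ (Fin.ext h)
  simp only [card_range] at this
  omega

lemma update_mem_of_lt_card_edge (hH : IsLowerSet (H : Set (Fin m → Fin p)))
    (h : k < #(edge H i v)) (hkp : k < p) : update v i ⟨k, hkp⟩ ∈ H := by
  obtain ⟨w, hw, hkw⟩ := exists_mem_edge_le_apply h
  rw [edge, mem_filter] at hw
  refine hH (fun j => ?_) hw.1
  by_cases hj : j = i
  · subst hj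
    rw [update_self, Fin.le_def]
    exact hkw
  · rw [update_of_ne hj, hw.2 j hj]

/-- A vertex `v` with a large `i`-edge is recovered from `v` raised to level `k` in direction `i`
together with `min (v i) k`. -/
lemma card_filter_lt_card_edge_le (hH : IsLowerSet (H : Set (Fin m → Fin p))) (hkp : k < p)
    (i : Fin m) :
    #{v ∈ H | k < #(edge H i v)} ≤ (k + 1) * #{v ∈ H | k ≤ (v i : ℕ)} := by
  let raise (v : Fin m → Fin p) : Fin m → Fin p := update v i (max (v i) ⟨k, hkp⟩)
  let clamp (v : Fin m → Fin p) : Fin (k + 1) := ⟨min (v i : ℕ) k, by omega⟩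
  have hraise_i : ∀ v, (raise v i : ℕ) = max (v i : ℕ) k := fun v => by
    simp [raise, Fin.coe_max]
  have hmaps : ∀ v ∈ {v ∈ H | k < #(edge H i v)},
      (raise v, clamp v) ∈ {v ∈ H | k ≤ (v i : ℕ)} ×ˢ (univ : Finset (Fin (k + 1))) := by
    intro v hv
    rw [mem_filter] at hv
    refine mem_product.mpr
      ⟨mem_filter.mpr ⟨?_, (le_max_right _ _).trans_eq (hraise_i v).symm⟩, mem_univ _⟩
    by_cases hkv : k ≤ (v i : ℕ)
    · have : max (v i) ⟨k, hkp⟩ = v i := max_eq_left (Fin.le_def.mpr hkv)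
      simpa only [raise, this, update_eq_self] using hv.1
    · have : max (v i) ⟨k, hkp⟩ = ⟨k, hkp⟩ := max_eq_right (not_le.mp hkv).le
      simpa only [raise, this] using update_mem_of_lt_card_edge hH hv.2 hkp
  have hinj : Injective fun v => (raise v, clamp v) := by
    intro v₁ v₂ h
    simp only [Prod.mk.injEq, clamp, Fin.mk.injEq] at h
    funext j
    by_cases hj : j = i
    · subst hj
      have := congrArg Fin.val (congrFun h.1 j)
      rw [hraise_i, hraise_i] at this
      exact Fin.ext (by omega)
    · simpa only [raise, update_of_ne hj] using congrFun h.1 j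
  calc #{v ∈ H | k < #(edge H i v)}
      ≤ #({v ∈ H | k ≤ (v i : ℕ)} ×ˢ (univ : Finset (Fin (k + 1)))) :=
        card_le_card_of_injOn _ hmaps hinj.injOn
    _ = (k + 1) * #{v ∈ H | k ≤ (v i : ℕ)} := by
        rw [card_product, card_univ, Fintype.card_fin, mul_comm]

end Edge

section Shattering

variable {m p k : ℕ} {H : Finset (Fin m → Fin p)}

/-- Each pattern `Fin n → Fin (k + 1)`, extended by `v` off the range of `S`, lies below `v`. -/
lemma pow_le_card_image_comp (hH : IsLowerSet (H : Set (Fin m → Fin p))) (hkp : k < p)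
    {v : Fin m → Fin p} (hv : v ∈ H) {n : ℕ} {S : Fin n → Fin m} (hS : Injective S)
    (hkS : ∀ j, k ≤ (v (S j) : ℕ)) :
    (k + 1) ^ n ≤ #(H.image fun h => h ∘ S) := by
  let pattern (f : Fin n → Fin (k + 1)) : Fin m → Fin p := extend S (Fin.castLE hkp ∘ f) v
  have hpattern_S : ∀ f j, pattern f (S j) = Fin.castLE hkp (f j) := fun f j =>
    hS.extend_apply _ _ j
  have hpattern_mem : ∀ f, pattern f ∈ H := by
    intro f
    refine hH (fun x => ?_) hv
    by_cases hx : ∃ j, S j = x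
    · obtain ⟨j, rfl⟩ := hx
      rw [hpattern_S, Fin.le_def, Fin.val_castLE]
      have := hkS j
      omega
    · exact (extend_apply' _ _ _ hx).le
  calc (k + 1) ^ n = #(univ : Finset (Fin n → Fin (k + 1))) := by simp
    _ ≤ #(H.image fun h => h ∘ S) :=
      card_le_card_of_injOn (fun f => pattern f ∘ S)
        (fun f _ => mem_image.mpr ⟨pattern f, hpattern_mem f, rfl⟩)
        fun f₁ _ f₂ _ h => funext fun j =>
          Fin.castLE_injective hkp (by simpa only [comp_apply, hpattern_S] using congrFun h j)

lemma card_filter_le_apply_le (hH : IsLowerSet (H : Set (Fin m → Fin p))) (hkp : k < p)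
    {dE : ℕ} (hdE : ∀ n : ℕ, ∀ S : Fin n → Fin m,
      (k + 1) ^ n ≤ #(H.image fun h => h ∘ S) → n ≤ dE)
    {v : Fin m → Fin p} (hv : v ∈ H) :
    #{i | k ≤ (v i : ℕ)} ≤ dE := by
  set T : Finset (Fin m) := {i | k ≤ (v i : ℕ)}
  exact hdE _ (T.orderEmbOfFin rfl) (pow_le_card_image_comp hH hkp hv
    (T.orderEmbOfFin rfl).injective fun j => (mem_filter.mp (T.orderEmbOfFin_mem rfl j)).2)

end Shattering

theorem stmt8_general {m p k : ℕ} (H : Finset (Fin m → Fin p))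
    (hdc : ∀ h ∈ H, ∀ g : Fin m → Fin p, (∀ i, g i ≤ h i) → g ∈ H)
    (dE : ℕ)
    (hdE : ∀ n : ℕ, ∀ S : Fin n → Fin m,
      (k + 1) ^ n ≤ (H.image fun h => h ∘ S).card → n ≤ dE) :
    ∑ v ∈ H, (Finset.univ.filter fun i : Fin m => k < (edge H i v).card).card
      ≤ (k + 1) * dE * H.card := by
  have hH : IsLowerSet (H : Set (Fin m → Fin p)) := fun h g hgh hh => hdc h hh g hgh
  rcases le_or_gt p k with hpk | hkp
  · have hzero : ∀ v ∈ H, #{i | k < #(edge H i v)} = 0 := fun v _ => by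
      simpa using fun i => card_edge_le.trans hpk
    simp [sum_eq_zero hzero]
  calc ∑ v ∈ H, #{i | k < #(edge H i v)}
      = ∑ i, #{v ∈ H | k < #(edge H i v)} :=
        sum_card_bipartiteAbove_eq_sum_card_bipartiteBelow (r := fun v i => k < #(edge H i v))
    _ ≤ ∑ i, (k + 1) * #{v ∈ H | k ≤ (v i : ℕ)} :=
        sum_le_sum fun i _ => card_filter_lt_card_edge_le hH hkp i
    _ = (k + 1) * ∑ v ∈ H, #{i | k ≤ (v i : ℕ)} := by
        rw [← mul_sum]
        congr 1
        exact (sum_card_bipartiteAbove_eq_sum_card_bipartiteBelow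
          (r := fun (v : Fin m → Fin p) i => k ≤ (v i : ℕ))).symm
    _ ≤ (k + 1) * ∑ _v ∈ H, dE := by
        gcongr with v hv
        exact card_filter_le_apply_le hH hkp hdE hv
    _ = (k + 1) * dE * #H := by rw [sum_const, smul_eq_mul]; ring

/-- For a finite nonempty downward-closed class `H ⊆ [p]^m` whose
`k`-exponential dimension is at most `dE`, the average `k`-degree of `H` is at
most `(k+1)·dE`, i.e. the sum of `k`-degrees is at most `(k+1)·dE·|H|`. -/
theorem stmt8 {m p k : ℕ} (H : Finset (Fin m → Fin p)) (hH : H.Nonempty)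
    (hdc : ∀ h ∈ H, ∀ g : Fin m → Fin p, (∀ i, g i ≤ h i) → g ∈ H)
    (dE : ℕ)
    (hdE : ∀ n : ℕ, ∀ S : Fin n → Fin m,
      (k + 1) ^ n ≤ (H.image fun h => h ∘ S).card → n ≤ dE) :
    ∑ v ∈ H, (Finset.univ.filter fun i : Fin m => k < (edge H i v).card).card
      ≤ (k + 1) * dE * H.card :=
  stmt8_general H hdc dE hdE
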